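/- Let w : (0,∞) → [0,∞) be non-increasing, let z(r) = (1+r)^{-t} for some t > 0, and suppose there exist C > 0 and a function η : (0,∞) → [0,∞) with η(r) → 0 as r → ∞ such that w(2r) ≤ C(1+r)^{-t} + η(r) w(r) for all r > 0. If w is bounded, then there exists C' > 0 such that w(r) ≤ C'(1+r)^{-t} for all r > 0. -/

import Mathlib

/-!
Put `v r = w r * (1 + r) ^ t`. Since `1 + 2r ≤ 2 (1 + r)`, the hypothesis gives
`v (2r) ≤ 2^t C + 2^t η(r) v(r)`, and once `2^t η(r) ≤ 1/2` this is `v (2r) ≤ 2^t C + v(r)/2`.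
Boundedness of `w` bounds `v` on an initial interval `(0, 2R]`, and the recursion propagates a
bound from `(0, 2^n · 2R]` to `(0, 2^(n+1) · 2R]`.
-/

open Set Filter

theorem le_max_of_le_add_half_two_mul {v : ℝ → ℝ} {R B K : ℝ} (hR : 0 < R)
    (hsmall : ∀ r, 0 < r → r ≤ 2 * R → v r ≤ B)
    (hstep : ∀ r, R ≤ r → v (2 * r) ≤ K + v r / 2) {r : ℝ} (hr : 0 < r) :
    v r ≤ max B (2 * K) := by
  set A := max B (2 * K)
  have hdyadic : ∀ n : ℕ, ∀ r, 0 < r → r ≤ 2 ^ n * (2 * R) → v r ≤ A := by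
    intro n
    induction n with
    | zero =>
      intro r hr hle
      exact (hsmall r hr (by simpa using hle)).trans (le_max_left _ _)
    | succ n ih =>
      intro r hr hle
      by_cases hcase : r ≤ 2 ^ n * (2 * R)
      · exact ih r hr hcase
      have hpow : (1 : ℝ) ≤ 2 ^ n := one_le_pow₀ one_le_two
      have hhalf : v (r / 2) ≤ A := ih (r / 2) (by positivity) (by rw [pow_succ] at hle; linarith)
      calc v r = v (2 * (r / 2)) := by ring_nf
        _ ≤ K + v (r / 2) / 2 := hstep (r / 2) (by nlinarith)
        _ ≤ A := by linarith [le_max_right B (2 * K)]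
  obtain ⟨n, hn⟩ := pow_unbounded_of_one_lt (r / (2 * R)) one_lt_two
  exact hdyadic n r hr (by rw [div_lt_iff₀ (by positivity)] at hn; exact hn.le)

theorem weighted_le_of_le_add_mul (w η : ℝ → ℝ) {t C : ℝ} (ht : 0 ≤ t)
    (hw_nonneg : ∀ r : ℝ, 0 < r → 0 ≤ w r)
    (hcontr : ∀ r : ℝ, 0 < r → w (2 * r) ≤ C * (1 + r) ^ (-t) + η r * w r)
    {r : ℝ} (hr : 0 < r) :
    w (2 * r) * (1 + 2 * r) ^ t ≤ 2 ^ t * C + 2 ^ t * η r * (w r * (1 + r) ^ t) := by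
  have h1r : 0 < 1 + r := by linarith
  have hweight : (1 + 2 * r) ^ t ≤ 2 ^ t * (1 + r) ^ t := by
    rw [← Real.mul_rpow zero_le_two h1r.le]
    exact Real.rpow_le_rpow (by linarith) (by linarith) ht
  have hcancel : (1 + r) ^ (-t) * (1 + r) ^ t = 1 := by
    rw [← Real.rpow_add h1r, neg_add_cancel, Real.rpow_zero]
  calc w (2 * r) * (1 + 2 * r) ^ t
      ≤ (C * (1 + r) ^ (-t) + η r * w r) * (2 ^ t * (1 + r) ^ t) :=
        mul_le_mul (hcontr r hr) hweight (by positivity)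
          ((hw_nonneg (2 * r) (by positivity)).trans (hcontr r hr))
    _ = 2 ^ t * C * ((1 + r) ^ (-t) * (1 + r) ^ t) + 2 ^ t * η r * (w r * (1 + r) ^ t) := by ring
    _ = 2 ^ t * C + 2 ^ t * η r * (w r * (1 + r) ^ t) := by rw [hcancel, mul_one]

theorem stmt8_general (w η : ℝ → ℝ) (t C : ℝ) (ht : 0 < t) (hC : 0 < C)
    (hw_nonneg : ∀ r : ℝ, 0 < r → 0 ≤ w r)
    (hη_lim : Tendsto η atTop (nhds 0))
    (hcontr : ∀ r : ℝ, 0 < r → w (2 * r) ≤ C * (1 + r) ^ (-t) + η r * w r)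
    (hw_bdd : ∃ M : ℝ, ∀ r : ℝ, 0 < r → w r ≤ M) :
    ∃ C' : ℝ, 0 < C' ∧ ∀ r : ℝ, 0 < r → w r ≤ C' * (1 + r) ^ (-t) := by
  obtain ⟨M, hM⟩ := hw_bdd
  obtain ⟨R₀, hR₀⟩ := eventually_atTop.1 <|
    (by simpa using hη_lim.const_mul ((2 : ℝ) ^ t) : Tendsto (fun r ↦ 2 ^ t * η r) atTop (nhds 0))
      |>.eventually_le_const one_half_pos
  set R := max R₀ 1
  have hR : 0 < R := lt_max_of_lt_right one_pos
  have hsmall : ∀ r, 0 < r → r ≤ 2 * R → w r * (1 + r) ^ t ≤ M * (1 + 2 * R) ^ t := fun r hr hle ↦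
    mul_le_mul (hM r hr) (Real.rpow_le_rpow (by linarith) (by linarith) ht.le) (by positivity)
      ((hw_nonneg r hr).trans (hM r hr))
  have hstep : ∀ r, R ≤ r →
      w (2 * r) * (1 + 2 * r) ^ t ≤ 2 ^ t * C + w r * (1 + r) ^ t / 2 := fun r hr ↦ by
    have hr0 : 0 < r := hR.trans_le hr
    have hv : 0 ≤ w r * (1 + r) ^ t := mul_nonneg (hw_nonneg r hr0) (by positivity)
    have hη : 2 ^ t * η r ≤ 1 / 2 := hR₀ r ((le_max_left _ _).trans hr)
    linarith [weighted_le_of_le_add_mul w η ht.le hw_nonneg hcontr hr0,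
      mul_le_mul_of_nonneg_right hη hv]
  refine ⟨max (M * (1 + 2 * R) ^ t) (2 * (2 ^ t * C)),
    lt_max_of_lt_right (by positivity), fun r hr ↦ ?_⟩
  have hv := le_max_of_le_add_half_two_mul (v := fun r ↦ w r * (1 + r) ^ t) hR hsmall hstep hr
  rw [Real.rpow_neg (by linarith), ← div_eq_mul_inv, le_div_iff₀ (by positivity)]
  exact hv

/-- bootstrapped algebraic decay. If a bounded non-increasing `w ≥ 0` satisfies
`w(2r) ≤ C(1+r)^{-t} + η(r) w(r)` with `η(r) → 0` as `r → ∞`, then `w(r) ≤ C'(1+r)^{-t}`. -/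
theorem stmt8 (w η : ℝ → ℝ) (t C : ℝ) (ht : 0 < t) (hC : 0 < C)
    (hw_nonneg : ∀ r : ℝ, 0 < r → 0 ≤ w r)
    (hw_anti : AntitoneOn w (Ioi (0 : ℝ)))
    (hη_nonneg : ∀ r : ℝ, 0 < r → 0 ≤ η r)
    (hη_lim : Tendsto η atTop (nhds 0))
    (hcontr : ∀ r : ℝ, 0 < r → w (2 * r) ≤ C * (1 + r) ^ (-t) + η r * w r)
    (hw_bdd : ∃ M : ℝ, ∀ r : ℝ, 0 < r → w r ≤ M) :
    ∃ C' : ℝ, 0 < C' ∧ ∀ r : ℝ, 0 < r → w r ≤ C' * (1 + r) ^ (-t) :=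
  stmt8_general w η t C ht hC hw_nonneg hη_lim hcontr hw_bdd
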